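/- For Hermitian positive semi-definite matrices X and Y, the matrix X∨Y = (X+Y)/2 + (X+Y)^{1/2} W^{1/2} (X+Y)^{1/2}, with W = ((X+Y)^†)^{1/2} [ (X+Y)/4 − X:Y ] ((X+Y)^†)^{1/2}, satisfies X∨Y ≤ X + Y − X:Y, with equality if and only if X:Y = 0. -/

import Mathlib

open scoped Matrix Matrix.Norms.L2Operator ComplexOrder

/-- The PSD square root of a PSD matrix, as `Matrix.PosSemidef.sqrt` was defined in Mathlib
(Dec 2024); it has since been removed from Mathlib. -/
noncomputable def Matrix.PosSemidef.sqrt {n : Type*} [Fintype n] [DecidableEq n] {𝕜 : Type*}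
    [RCLike 𝕜] {A : Matrix n n 𝕜} (hA : A.PosSemidef) : Matrix n n 𝕜 :=
  (hA.1.eigenvectorUnitary : Matrix n n 𝕜) *
    Matrix.diagonal (fun i => ((√(hA.1.eigenvalues i) : ℝ) : 𝕜)) *
    (star hA.1.eigenvectorUnitary : Matrix n n 𝕜)

/-- `MPInv A B` means `B` is the Moore-Penrose inverse of `A`. -/
def MPInv {n : ℕ} (A B : Matrix (Fin n) (Fin n) ℂ) : Prop :=
  A * B * A = A ∧ B * A * B = B ∧ (A * B).IsHermitian ∧ (B * A).IsHermitian

/-! Put `S = X + Y`, `R = S^{1/2}`, `T = (S^†)^{1/2}` and `W = Wh²`. Since `R` and `T` commute,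
`R T = (S S^†)^{1/2} = S S^† =: Q`, the orthogonal projection onto the range of `S`. That range
contains the ranges of `X` and `Y` (their kernels contain that of `S`), so `Q` fixes `X:Y` and
`R W R = Q (S/4 - X:Y) Q = S/4 - X:Y`. Expanding with this identity,
`X + Y - X:Y - X∨Y = Nᴴ N` for `N = Wh R - R/2`, which gives the inequality.
Equality forces `N = 0`, so `R W R = (R/2)(R/2) = S/4` and `X:Y = 0`. Conversely, if `X:Y = 0`
then `W = T (S/4) T = Q/4`, so `Wh = Q/2` and `X∨Y = S/2 + R (Q/2) R = S`. -/

open scoped MatrixOrder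

section CStarAlgebra

variable {A : Type*} [CStarAlgebra A] [PartialOrder A] [StarOrderedRing A]

theorem CFC.commute_sqrt_sqrt {a b : A} (h : Commute a b) :
    Commute (CFC.sqrt a) (CFC.sqrt b) := by
  rw [CFC.sqrt_eq_cfc, CFC.sqrt_eq_cfc]
  exact ((h.cfc_nnreal _).symm.cfc_nnreal _).symm

theorem CFC.sqrt_mul_sqrt_of_commute {a b : A} (ha : 0 ≤ a) (hb : 0 ≤ b) (h : Commute a b) :
    CFC.sqrt a * CFC.sqrt b = CFC.sqrt (a * b) := by
  have hsqrt := CFC.commute_sqrt_sqrt h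
  refine (CFC.sqrt_unique ?_ (hsqrt.mul_nonneg (CFC.sqrt_nonneg a) (CFC.sqrt_nonneg b))).symm
  rw [hsqrt.symm.mul_mul_mul_comm, CFC.sqrt_mul_sqrt_self a, CFC.sqrt_mul_sqrt_self b]

end CStarAlgebra

namespace Matrix

variable {m k 𝕜 : Type*} [Fintype m] [RCLike 𝕜]

theorem conjTranspose_mul_self_sub_half_smul {R W : Matrix m m 𝕜} (hR : R.IsHermitian)
    (hW : W.IsHermitian) :
    (W * R - (2 : 𝕜)⁻¹ • R)ᴴ * (W * R - (2 : 𝕜)⁻¹ • R)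
      = R * W * (W * R) - R * W * R + (4 : 𝕜)⁻¹ • (R * R) := by
  have h4 : (4 : 𝕜)⁻¹ = (2 : 𝕜)⁻¹ * (2 : 𝕜)⁻¹ := by norm_num
  rw [conjTranspose_sub, conjTranspose_mul, conjTranspose_smul, hR.eq, hW.eq, h4, ← smul_smul]
  simp only [star_inv₀, star_ofNat, Matrix.sub_mul, Matrix.mul_sub, Matrix.smul_mul,
    Matrix.mul_smul, Matrix.mul_assoc]
  module

variable [DecidableEq m]

theorem PosSemidef.sqrt_eq_cfcSqrt {A : Matrix m m 𝕜} (hA : A.PosSemidef) :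
    hA.sqrt = CFC.sqrt A := by
  rw [CFC.sqrt_eq_cfc, cfc_nnreal_eq_real _ A hA.nonneg, hA.1.cfc_eq]
  simp only [IsHermitian.cfc, Unitary.conjStarAlgAut_apply, PosSemidef.sqrt, Function.comp_def]
  congr
  funext i
  rw [Real.coe_sqrt, Real.coe_toNNReal _ (hA.eigenvalues_nonneg i)]

theorem mul_eq_zero_of_add_mul_eq_zero [Fintype k] {A B : Matrix m m 𝕜} {N : Matrix m k 𝕜}
    (hA : 0 ≤ A) (hB : 0 ≤ B) (h : (A + B) * N = 0) : A * N = 0 := by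
  obtain ⟨C, rfl⟩ := CStarAlgebra.nonneg_iff_eq_star_mul_self.mp hA
  have hsum : Nᴴ * (star C * C) * N + Nᴴ * B * N = 0 := by
    rw [← Matrix.add_mul, ← Matrix.mul_add, Matrix.mul_assoc, h, Matrix.mul_zero]
  have hCN : (C * N)ᴴ * (C * N) = 0 := by
    rw [conjTranspose_mul, ← (add_eq_zero_iff_of_nonneg
      ((nonneg_iff_posSemidef.mp hA).conjTranspose_mul_mul_same N).nonneg
      ((nonneg_iff_posSemidef.mp hB).conjTranspose_mul_mul_same N).nonneg).mp hsum |>.1]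
    simp only [star_eq_conjTranspose, Matrix.mul_assoc]
  rw [Matrix.mul_assoc, conjTranspose_mul_self_eq_zero.mp hCN, Matrix.mul_zero]

theorem mul_eq_self_of_le {X S Q : Matrix m m 𝕜} (hX : 0 ≤ X) (hXS : X ≤ S) (hQ : S * Q = S) :
    X * Q = X := by
  have h : (X + (S - X)) * (1 - Q) = 0 := by
    rw [add_sub_cancel, Matrix.mul_sub, Matrix.mul_one, hQ, sub_self]
  have := mul_eq_zero_of_add_mul_eq_zero hX (sub_nonneg.mpr hXS) h
  rwa [Matrix.mul_sub, Matrix.mul_one, sub_eq_zero, eq_comm] at this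

end Matrix

namespace MPInv

variable {n : ℕ} {S Sd : Matrix (Fin n) (Fin n) ℂ}

theorem commute (h : MPInv S Sd) (hS : S.IsHermitian) (hSd : Sd.IsHermitian) : Commute S Sd := by
  have := h.2.2.1.eq
  rwa [Matrix.conjTranspose_mul, hS.eq, hSd.eq, eq_comm] at this

theorem mul_mul_mpinv (h : MPInv S Sd) (hS : S.IsHermitian) (hSd : Sd.IsHermitian) :
    S * (S * Sd) = S := by
  rw [(h.commute hS hSd).eq, ← Matrix.mul_assoc, h.1]

theorem sqrt_mul_sqrt (h : MPInv S Sd) (hS : 0 ≤ S) (hSd : 0 ≤ Sd) :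
    CFC.sqrt S * CFC.sqrt Sd = S * Sd := by
  have hcomm := h.commute hS.isSelfAdjoint hSd.isSelfAdjoint
  rw [CFC.sqrt_mul_sqrt_of_commute hS hSd hcomm]
  exact CFC.sqrt_unique (by rw [← Matrix.mul_assoc, h.1]) (hcomm.mul_nonneg hS hSd)

theorem sqrt_mul_sqrt' (h : MPInv S Sd) (hS : 0 ≤ S) (hSd : 0 ≤ Sd) :
    CFC.sqrt Sd * CFC.sqrt S = S * Sd := by
  rw [← (CFC.commute_sqrt_sqrt (h.commute hS.isSelfAdjoint hSd.isSelfAdjoint)).eq,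
    h.sqrt_mul_sqrt hS hSd]

theorem proj_conj_parallelSum {X Y : Matrix (Fin n) (Fin n) ℂ} (h : MPInv (X + Y) Sd)
    (hX : 0 ≤ X) (hY : 0 ≤ Y) (hSd : Sd.IsHermitian) (c : ℂ) :
    (X + Y) * Sd * (c • (X + Y) - X * Sd * Y) * ((X + Y) * Sd) = c • (X + Y) - X * Sd * Y := by
  set Q := (X + Y) * Sd
  have hSQ : (X + Y) * Q = X + Y := h.mul_mul_mpinv (add_nonneg hX hY).isSelfAdjoint hSd
  have hXQ : X * Q = X := Matrix.mul_eq_self_of_le hX (le_add_of_nonneg_right hY) hSQ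
  have hYQ : Y * Q = Y := Matrix.mul_eq_self_of_le hY (le_add_of_nonneg_left hX) hSQ
  have hQX : Q * X = X := by
    have := congrArg Matrix.conjTranspose hXQ
    rwa [Matrix.conjTranspose_mul, Matrix.IsHermitian.eq hX.isSelfAdjoint, h.2.2.1.eq] at this
  simp only [Matrix.mul_sub, Matrix.sub_mul, Matrix.mul_smul, Matrix.smul_mul, Matrix.mul_assoc]
  rw [hSQ, show Q * (X + Y) = X + Y from h.1, hYQ, ← Matrix.mul_assoc Q X, hQX]

theorem sqrt_conj_parallelSum {X Y : Matrix (Fin n) (Fin n) ℂ} (h : MPInv (X + Y) Sd)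
    (hX : 0 ≤ X) (hY : 0 ≤ Y) (hSd : 0 ≤ Sd) (c : ℂ) :
    CFC.sqrt (X + Y) * (CFC.sqrt Sd * (c • (X + Y) - X * Sd * Y) * CFC.sqrt Sd) * CFC.sqrt (X + Y)
      = c • (X + Y) - X * Sd * Y := by
  have hS := add_nonneg hX hY
  calc _ = CFC.sqrt (X + Y) * CFC.sqrt Sd * (c • (X + Y) - X * Sd * Y)
        * (CFC.sqrt Sd * CFC.sqrt (X + Y)) := by simp only [Matrix.mul_assoc]
    _ = _ := by
      rw [h.sqrt_mul_sqrt hS hSd, h.sqrt_mul_sqrt' hS hSd]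
      exact h.proj_conj_parallelSum hX hY hSd.isSelfAdjoint c

theorem sqrt_mul_mul_sqrt_eq_half {W : Matrix (Fin n) (Fin n) ℂ} (h : MPInv S Sd) (hS : 0 ≤ S)
    (hSd : 0 ≤ Sd) (hW : 0 ≤ W) (hW2 : W * W = CFC.sqrt Sd * ((4 : ℂ)⁻¹ • S) * CFC.sqrt Sd) :
    CFC.sqrt S * W * CFC.sqrt S = (2 : ℂ)⁻¹ • S := by
  have hT := h.sqrt_mul_sqrt hS hSd
  have hT' := h.sqrt_mul_sqrt' hS hSd
  have hQQ : S * Sd * (S * Sd) = S * Sd := by rw [← Matrix.mul_assoc, h.1]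
  have hQ : 0 ≤ S * Sd := (h.commute hS.isSelfAdjoint hSd.isSelfAdjoint).mul_nonneg hS hSd
  have hTST : CFC.sqrt Sd * S * CFC.sqrt Sd = S * Sd := by
    calc _ = CFC.sqrt Sd * CFC.sqrt S * (CFC.sqrt S * CFC.sqrt Sd) := by
          conv_lhs => rw [← CFC.sqrt_mul_sqrt_self S hS]
          simp only [Matrix.mul_assoc]
      _ = S * Sd := by rw [hT', hT, hQQ]
  have hRQR : CFC.sqrt S * (S * Sd) * CFC.sqrt S = S := by
    calc _ = CFC.sqrt S * CFC.sqrt S * (CFC.sqrt Sd * CFC.sqrt S) := by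
          rw [← hT]; simp only [Matrix.mul_assoc]
      _ = S := by
        rw [CFC.sqrt_mul_sqrt_self S hS, hT', h.mul_mul_mpinv hS.isSelfAdjoint hSd.isSelfAdjoint]
  have hW' : W = (2 : ℂ)⁻¹ • (S * Sd) := by
    refine (CFC.sq_eq_sq_iff W _ hW
      ((Matrix.nonneg_iff_posSemidef.mp hQ).smul (by positivity)).nonneg).mp ?_
    rw [sq, sq, hW2, Matrix.mul_smul, Matrix.smul_mul, hTST, Matrix.mul_smul, Matrix.smul_mul,
      smul_smul, hQQ]
    norm_num
  rw [hW', Matrix.mul_smul, Matrix.smul_mul, hRQR]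

end MPInv

/-- X∨Y ≤ X + Y - X:Y, with equality iff X:Y = 0. -/
theorem sup_le_C_iff {n : ℕ} (X Y Sd Sdh Wh : Matrix (Fin n) (Fin n) ℂ)
    (hX : X.PosSemidef) (hY : Y.PosSemidef) (hSd : MPInv (X + Y) Sd)
    (hSdh : Sdh.PosSemidef) (hSdh2 : Sdh * Sdh = Sd)
    (hWh : Wh.PosSemidef)
    (hWh2 : Wh * Wh = Sdh * ((4 : ℂ)⁻¹ • (X + Y) - X * Sd * Y) * Sdh) :
    (X + Y - X * Sd * Y
      - ((2 : ℂ)⁻¹ • (X + Y) + (hX.add hY).sqrt * Wh * (hX.add hY).sqrt)).PosSemidef ∧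
    ((2 : ℂ)⁻¹ • (X + Y) + (hX.add hY).sqrt * Wh * (hX.add hY).sqrt
        = X + Y - X * Sd * Y ↔ X * Sd * Y = 0) := by
  have hS := (hX.add hY).nonneg
  have hSd0 : 0 ≤ Sd := hSdh2 ▸ (hSdh.nonneg.isSelfAdjoint).mul_self_nonneg
  obtain rfl : Sdh = CFC.sqrt Sd := (CFC.sqrt_unique hSdh2 hSdh.nonneg).symm
  rw [(hX.add hY).sqrt_eq_cfcSqrt]
  set R := CFC.sqrt (X + Y)
  have hR : R.IsHermitian := (CFC.sqrt_nonneg (X + Y)).isSelfAdjoint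
  have hRW : R * Wh * (Wh * R) = (4 : ℂ)⁻¹ • (X + Y) - X * Sd * Y := by
    rw [Matrix.mul_assoc, ← Matrix.mul_assoc Wh, hWh2, ← Matrix.mul_assoc]
    exact hSd.sqrt_conj_parallelSum hX.nonneg hY.nonneg hSd0 _
  have hgap : X + Y - X * Sd * Y - ((2 : ℂ)⁻¹ • (X + Y) + R * Wh * R)
      = (Wh * R - (2 : ℂ)⁻¹ • R)ᴴ * (Wh * R - (2 : ℂ)⁻¹ • R) := by
    rw [Matrix.conjTranspose_mul_self_sub_half_smul hR hWh.1, hRW, CFC.sqrt_mul_sqrt_self _ hS]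
    module
  refine ⟨hgap ▸ Matrix.posSemidef_conjTranspose_mul_self _, fun heq => ?_, fun hP => ?_⟩
  · have hWR : Wh * R = (2 : ℂ)⁻¹ • R :=
      sub_eq_zero.mp (Matrix.conjTranspose_mul_self_eq_zero.mp (by rw [← hgap, heq, sub_self]))
    have hRW' : R * Wh = (2 : ℂ)⁻¹ • R := by
      simpa [hR.eq, hWh.1.eq] using congrArg Matrix.conjTranspose hWR
    rw [hRW', hWR, Matrix.smul_mul, Matrix.mul_smul, smul_smul, CFC.sqrt_mul_sqrt_self _ hS] at hRW
    rw [show (2 : ℂ)⁻¹ * 2⁻¹ = 4⁻¹ by norm_num] at hRW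
    exact sub_eq_self.mp hRW.symm
  · rw [hP, sub_zero] at hWh2 ⊢
    rw [hSd.sqrt_mul_mul_sqrt_eq_half hS hSd0 hWh.nonneg hWh2]
    module
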